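/- arXiv:2507.14471 — 6 statements merged into one kernel-verified Lean document; each statement's English description precedes it below -/
import Mathlib

section
/- Let V be a type with a distinguished empty value ⊥, let δ : ℕ, and let s : ℕ → V be a send stream. Define the FIFO channel state q : ℕ → List V by q 0 = List.replicate δ ⊥ and q (n+1) = ((q n) ++ [s n]).tail, and the receive stream r : ℕ → V by r n = ((q n) ++ [s n]).head!. Then for every n, the queue length is invariant, (q n).length = δ, and the received value satisfies r n = ⊥ if n < δ and r n = s (n − δ) if n ≥ δ. In other words, a FIFO pre-populated with δ initial empty tokens, where at every tick one value is simultaneously enqueued at the tail and one value dequeued from the head, faithfully implements a logical delay of δ ticks. -/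
/-- A FIFO channel pre-populated with `δ` empty tokens `bot`, where at every tick one
value is enqueued at the tail and one dequeued from the head, implements a logical
delay of `δ` ticks. -/
theorem fifo_implements_logical_delay {V : Type*} [Inhabited V] (bot : V) (δ : ℕ)
    (s : ℕ → V) (q : ℕ → List V) (r : ℕ → V)
    (hq0 : q 0 = List.replicate δ bot)
    (hq : ∀ n, q (n + 1) = ((q n) ++ [s n]).tail)
    (hr : ∀ n, r n = ((q n) ++ [s n]).head!) :
    ∀ n, (q n).length = δ ∧ (n < δ → r n = bot) ∧ (δ ≤ n → r n = s (n - δ)) := by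
  set L : ℕ → List V := fun n => List.replicate δ bot ++ (List.range n).map s with hL
  have key : ∀ n, (q n).length = δ ∧ r n = (L (n + 1))[n]'(by simp [hL]; omega) := by
    have hqL : ∀ n, q n = (L n).drop n := by
      intro n
      induction n with
      | zero => simpa [hL] using hq0
      | succ n ih =>
        have hlen : n ≤ (L n).length := by simp [hL]
        rw [hq n, ih]
        have : (L n).drop n ++ [s n] = (L (n+1)).drop n := by
          rw [← List.drop_append_of_le_length hlen]
          simp [hL, List.range_succ]
        rw [this, ← List.tail_drop]
    intro n
    have hlen : n < (L (n+1)).length := by simp [hL]; omega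
    have h1 : q n ++ [s n] = (L (n+1)).drop n := by
      rw [hqL n, ← List.drop_append_of_le_length (by simp [hL])]
      simp [hL, List.range_succ]
    refine ⟨?_, ?_⟩
    · rw [hqL n]; simp [hL]
    · rw [hr n, h1]
      conv_lhs => rw [List.drop_eq_getElem_cons hlen]
      rw [List.head!_cons]
  intro n
  obtain ⟨hq', hr'⟩ := key n
  refine ⟨hq', ?_, ?_⟩
  · intro h
    rw [hr', List.getElem_append_left (by simpa)]
    simp
  · intro h
    rw [hr', List.getElem_append_right (by simpa)]
    simp [List.getElem_map]
end

section
/- Let V be a type with distinguished empty value ⊥, δ : ℕ, and s : ℕ → V a send stream. Let r : ℕ → V be the receive stream of the FIFO channel with δ initial empty tokens (q 0 = List.replicate δ ⊥, q (n+1) = ((q n) ++ [s n]).tail, r n = ((q n) ++ [s n]).head!), and let D : (ℕ → V) → (ℕ → V) be the unit-delay operator with initial value ⊥ (D s 0 = ⊥, D s (n+1) = s n). Then r = D^[δ] s, i.e. for every n the value received from the distributed FIFO implementation equals the value produced by the centralised cascade of δ unit-delay operators. The distributed and centralised channel implementations produce identical streams. -/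
/-!
Both implementations output the stream `u := D^[δ] s`, which is `⊥` for the first `δ` ticks and
`u (n + δ) = s n` afterwards. The FIFO is a shift register: by induction its contents at tick `n`
are the window `u n, …, u (n + δ - 1)`, so appending `s n = u (n + δ)` and popping the head
returns `u n` and leaves the next window.
-/

section Delay

variable {V : Type*} {bot : V} {D : (ℕ → V) → (ℕ → V)}

theorem iterate_delay_of_lt (hD0 : ∀ t : ℕ → V, D t 0 = bot)
    (hDs : ∀ (t : ℕ → V) (n : ℕ), D t (n + 1) = t n) (t : ℕ → V) :
    ∀ {k n : ℕ}, n < k → D^[k] t n = bot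
  | k + 1, 0, _ => by rw [Function.iterate_succ_apply', hD0]
  | k + 1, n + 1, h => by
    rw [Function.iterate_succ_apply', hDs, iterate_delay_of_lt hD0 hDs t (by omega)]

theorem iterate_delay_add (hDs : ∀ (t : ℕ → V) (n : ℕ), D t (n + 1) = t n) (t : ℕ → V) (n : ℕ) :
    ∀ k, D^[k] t (n + k) = t n
  | 0 => rfl
  | k + 1 => by
    rw [Function.iterate_succ_apply', ← add_assoc, hDs, iterate_delay_add hDs t n k]

end Delay

section Window

variable {V : Type*}

def window (u : ℕ → V) (n len : ℕ) : List V :=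
  (List.range len).map fun i => u (n + i)

theorem window_append_singleton (u : ℕ → V) (n len : ℕ) :
    window u n len ++ [u (n + len)] = window u n (len + 1) := by
  simp [window, List.range_succ]

theorem window_succ (u : ℕ → V) (n len : ℕ) :
    window u n (len + 1) = u n :: window u (n + 1) len := by
  simp only [window, List.range_succ_eq_map, List.map_cons, List.map_map, add_zero]
  congr 2
  funext i
  simp only [Function.comp_apply, add_assoc, add_comm 1 i]

theorem window_eq_replicate {u : ℕ → V} {c : V} {n len : ℕ} (hu : ∀ i < len, u (n + i) = c) :
    window u n len = List.replicate len c := by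
  simp only [window, List.eq_replicate_iff, List.length_map, List.length_range, List.mem_map,
    List.mem_range, true_and]
  rintro _ ⟨i, hi, rfl⟩
  exact hu i hi

theorem fifo_eq_window {u : ℕ → V} {len : ℕ} {q : ℕ → List V} (hq0 : q 0 = window u 0 len)
    (hq : ∀ n, q (n + 1) = (q n ++ [u (n + len)]).tail) (n : ℕ) : q n = window u n len := by
  induction n with
  | zero => exact hq0
  | succ n ih => rw [hq, ih, window_append_singleton, window_succ, List.tail_cons]

theorem head!_window_append_singleton [Inhabited V] (u : ℕ → V) (n len : ℕ) :
    (window u n len ++ [u (n + len)]).head! = u n := by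
  rw [window_append_singleton, window_succ, List.head!_cons]

end Window

/-- The distributed channel implementation (a FIFO with `δ` initial empty tokens)
and the centralised implementation (a cascade of `δ` unit-delay operators)
produce identical receive streams. -/
theorem fifo_eq_iterated_delay {V : Type*} [Inhabited V] (bot : V) (δ : ℕ)
    (s : ℕ → V) (q : ℕ → List V) (r : ℕ → V)
    (hq0 : q 0 = List.replicate δ bot)
    (hq : ∀ n, q (n + 1) = ((q n) ++ [s n]).tail)
    (hr : ∀ n, r n = ((q n) ++ [s n]).head!)
    (D : (ℕ → V) → (ℕ → V))
    (hD0 : ∀ t : ℕ → V, D t 0 = bot)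
    (hDs : ∀ (t : ℕ → V) (n : ℕ), D t (n + 1) = t n) :
    r = D^[δ] s := by
  set u := D^[δ] s
  have hus : ∀ n, u (n + δ) = s n := fun n => iterate_delay_add hDs s n δ
  have hu0 : window u 0 δ = List.replicate δ bot :=
    window_eq_replicate fun i hi => iterate_delay_of_lt hD0 hDs s (by omega)
  have hqu : ∀ n, q n = window u n δ :=
    fifo_eq_window (hq0.trans hu0.symm) fun n => by rw [hus, hq]
  funext n
  rw [hr, hqu, ← hus, head!_window_append_singleton]
end

section
/- Let p, d : ℕ with p > 0 and d > 0, and let L = Nat.lcm p d. Then for every n : ℕ, p divides n if and only if there exist i < L / p and j : ℕ with n = i * p + j * L. That is, the set of release times of a task with period p (the multiples of p) is exactly the union, over the L/p pipeline threads, of the release times of a task with period L and initial offset i·p. -/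
/-- The release times of a task with period `p` (the multiples of `p`) are exactly
the union, over the `lcm p d / p` pipeline threads, of the release times of a task
with period `lcm p d` and initial offset `i * p`. -/
theorem pipeline_release_times_cover (p d : ℕ) (hp : p > 0) (hd : d > 0)
    (L : ℕ) (hL : L = Nat.lcm p d) :
    ∀ n : ℕ, p ∣ n ↔ ∃ i, i < L / p ∧ ∃ j : ℕ, n = i * p + j * L := by
  intro n
  have hpL : p ∣ L := hL ▸ Nat.dvd_lcm_left p d
  have hLpos : 0 < L := hL ▸ Nat.pos_of_ne_zero (Nat.lcm_ne_zero hp.ne' hd.ne')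
  have hm : L / p * p = L := Nat.div_mul_cancel hpL
  have hmpos : 0 < L / p := Nat.div_pos (Nat.le_of_dvd hLpos hpL) hp
  constructor
  · rintro ⟨k, rfl⟩
    refine ⟨k % (L / p), Nat.mod_lt _ hmpos, k / (L / p), ?_⟩
    calc p * k = (k % (L / p) + k / (L / p) * (L / p)) * p := by
          rw [Nat.mod_add_div']; ring
      _ = k % (L / p) * p + k / (L / p) * (L / p * p) := by ring
      _ = k % (L / p) * p + k / (L / p) * L := by rw [hm]
  · rintro ⟨i, _, j, rfl⟩
    exact Dvd.dvd.add (Dvd.intro i (Nat.mul_comm p i)) (Dvd.dvd.mul_left hpL j)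
end

section
/- Let V be a type with distinguished empty value ⊥ and δ : ℕ. Model an interleaved execution on a FIFO queue as a word w : List (Option V), where `some v` denotes pushing v to the tail and `none` denotes popping the head; the initial queue is List.replicate δ ⊥, and a pop records the popped value in an output list. Suppose every prefix of w contains at most δ plus (the number of pushes in that prefix) pops. Then every pop in the execution of w finds a nonempty queue, and the list of popped values produced by executing w equals the first k elements of List.replicate δ ⊥ ++ (the list of pushed values of w, in order), where k is the total number of pops in w. In particular, the sequence of values observed by the receiver depends only on the sequence of pushed values and the number of pops, not on how pushes and pops are interleaved. -/
/-- One step of a FIFO-queue execution: the state is the pair (queue, popped-values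
output list); `some v` pushes `v` to the tail, `none` pops the head and records it. -/
def fifoStep {V : Type*} [Inhabited V] (st : List V × List V) (a : Option V) :
    List V × List V :=
  match a with
  | some v => (st.1 ++ [v], st.2)
  | none => (st.1.tail, st.2 ++ [st.1.head!])

/-!
Executing a word from queue `q` is the same as first appending all pushed values to `q` and
then popping `k` times, where `k` is the number of pops: pushes only touch the tail and pops
only the head, so they commute as long as no pop meets an empty queue. The admissibility
bound (pops never outnumber the initial tokens plus the pushes so far) is exactly what rules
that out, and it is inherited by the suffix of a word once its first letter has been executed.
-/

namespace List

theorem length_filterMap_id {V : Type*} (l : List (Option V)) :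
    (l.filterMap id).length = l.countP (fun a => a.isSome) := by
  rw [countP_eq_length_filter]
  exact reduceOption_length_eq

end List

def PopsBounded {V : Type*} (n : ℕ) (w : List (Option V)) : Prop :=
  ∀ m : ℕ, (w.take m).countP (fun a => a.isNone) ≤ n + (w.take m).countP (fun a => a.isSome)

namespace PopsBounded

variable {V : Type*} {n : ℕ} {w : List (Option V)}

theorem take (h : PopsBounded n w) (k : ℕ) : PopsBounded n (w.take k) := by
  intro m
  rw [List.take_take]
  exact h _

theorem of_cons_some {v : V} (h : PopsBounded n (some v :: w)) : PopsBounded (n + 1) w := by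
  intro m
  have := h (m + 1)
  simp only [List.take_succ_cons, List.countP_cons, Option.isNone_some, Option.isSome_some,
    Bool.false_eq_true, if_true, if_false] at this
  omega

theorem pos_of_cons_none (h : PopsBounded n (none :: w)) : 0 < n :=
  (by simpa using h 1 : 1 ≤ n)

theorem of_cons_none (h : PopsBounded n (none :: w)) : PopsBounded (n - 1) w := by
  intro m
  have := h (m + 1)
  simp only [List.take_succ_cons, List.countP_cons, Option.isNone_none, Option.isSome_none,
    Bool.false_eq_true, if_true, if_false] at this
  omega

theorem countP_take_isNone_lt {m : ℕ} (h : PopsBounded n w) (hm : w[m]? = some none) :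
    (w.take m).countP (fun a => a.isNone) < n + (w.take m).countP (fun a => a.isSome) := by
  have := h (m + 1)
  simp only [List.take_add_one, hm, Option.toList_some, List.countP_append,
    List.countP_singleton, Option.isNone_none, Option.isSome_none,
    Bool.false_eq_true, if_true, if_false] at this
  omega

end PopsBounded

theorem foldl_fifoStep_of_popsBounded {V : Type*} [Inhabited V] {w : List (Option V)}
    {q o : List V} (h : PopsBounded q.length w) :
    w.foldl fifoStep (q, o) =
      ((q ++ w.filterMap id).drop (w.countP (fun a => a.isNone)),
        o ++ (q ++ w.filterMap id).take (w.countP (fun a => a.isNone))) := by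
  induction w generalizing q o with
  | nil => simp
  | cons a w ih =>
    cases a with
    | some v =>
      have h' : PopsBounded (q ++ [v]).length w := by simpa using h.of_cons_some
      simp [fifoStep, ih h']
    | none =>
      obtain ⟨x, q, rfl⟩ := List.exists_cons_of_length_pos h.pos_of_cons_none
      have h' : PopsBounded q.length w := by simpa using h.of_cons_none
      simp [fifoStep, ih h']

/-- Executing an interleaved word of pushes and pops on a FIFO queue initially
holding `δ` empty tokens: if every prefix contains at most `δ` plus its number of
pushes many pops, then every pop finds a nonempty queue, and the list of popped
values equals the first `k` elements of the `δ` initial tokens followed by the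
pushed values in order, where `k` is the total number of pops. -/
theorem fifo_interleaving_confluent {V : Type*} [Inhabited V] (bot : V) (δ : ℕ)
    (w : List (Option V))
    (hadm : ∀ m : ℕ, (w.take m).countP (fun a => a.isNone) ≤
      δ + (w.take m).countP (fun a => a.isSome)) :
    (∀ m : ℕ, w[m]? = some none →
      ((w.take m).foldl fifoStep (List.replicate δ bot, ([] : List V))).1 ≠ []) ∧
    (w.foldl fifoStep (List.replicate δ bot, ([] : List V))).2 =
      (List.replicate δ bot ++ w.filterMap id).take
        (w.countP (fun a => a.isNone)) := by
  have h : PopsBounded (List.replicate δ bot).length w := by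
    rw [List.length_replicate]
    exact hadm
  refine ⟨fun m hm => ?_, by simp [foldl_fifoStep_of_popsBounded h]⟩
  have hpop := h.countP_take_isNone_lt hm
  rw [foldl_fifoStep_of_popsBounded (h.take m), Ne, List.drop_eq_nil_iff, List.length_append,
    List.length_filterMap_id]
  omega
end

section
/- Let A, B, V be types, g : A → A a sender state-update function, out : A → V a sender output function, and h : B → V → B a receiver state-update function. Define on global states A × B × List V the sender step SND (σ, ρ, q) = (g σ, ρ, q ++ [out σ]) and the receiver step RCV (σ, ρ, q) = (σ, h ρ q.head!, q.tail). Then for every global state (σ, ρ, q) with q ≠ [], RCV (SND (σ, ρ, q)) = SND (RCV (σ, ρ, q)). That is, an enabled receiver step and a sender step on a shared FIFO channel commute: performing them in either order yields the same global state. -/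
/-- An enabled receiver step and a sender step on a shared FIFO channel commute:
performing them in either order yields the same global state. -/
theorem sender_receiver_commute {A B V : Type*} [Inhabited V]
    (g : A → A) (out : A → V) (h : B → V → B)
    (SND RCV : A × B × List V → A × B × List V)
    (hSND : ∀ st : A × B × List V, SND st = (g st.1, st.2.1, st.2.2 ++ [out st.1]))
    (hRCV : ∀ st : A × B × List V, RCV st = (st.1, h st.2.1 st.2.2.head!, st.2.2.tail)) :
    ∀ st : A × B × List V, st.2.2 ≠ [] → RCV (SND st) = SND (RCV st) := by
  rintro ⟨σ, ρ, q⟩ hq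
  cases q with
  | nil => simp at hq
  | cons a q => simp [hSND, hRCV]
end

section
/- Let A, B, V be types, g : A → A, out : A → V, h : B → V → B, and define on global states A × B × List V the sender step SND (σ, ρ, q) = (g σ, ρ, q ++ [out σ]) and the receiver step RCV (σ, ρ, q) = (σ, h ρ q.head!, q.tail). Fix an initial state (σ₀, ρ₀, q₀). Call a word w : List Bool (true = SND, false = RCV) admissible if in every prefix of w the number of RCV steps is at most q₀.length plus the number of SND steps in that prefix. Then for any two admissible words w₁ and w₂ containing the same number of SND steps and the same number of RCV steps, folding the corresponding step functions over w₁ and over w₂ from (σ₀, ρ₀, q₀) yields the same final global state. That is, the final state of a producer–consumer execution over a FIFO channel is independent of the interleaving of sender and receiver steps. -/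
/-!
After `m` sender and `n` receiver steps, whatever their order, the channel has carried the
word `q₀ ++ [out σ₀, out (g σ₀), …, out (g^[m-1] σ₀)]`, the receiver has consumed its first
`n` letters, and the rest is still queued. Admissibility guarantees `n` never exceeds the
length of that word, so every receive pops a genuine letter rather than the `head!` default.
-/

/-- Sender step on a global producer–consumer state: update the sender state and
append the sender's output to the tail of the FIFO channel. -/
def sndStep {A B V : Type*} (g : A → A) (out : A → V)
    (st : A × B × List V) : A × B × List V :=
  (g st.1, st.2.1, st.2.2 ++ [out st.1])

/-- Receiver step on a global producer–consumer state: consume the head of the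
FIFO channel and update the receiver state with it. -/
def rcvStep {A B V : Type*} [Inhabited V] (h : B → V → B)
    (st : A × B × List V) : A × B × List V :=
  (st.1, h st.2.1 st.2.2.head!, st.2.2.tail)

/-- A word over {SND, RCV} (true = sender step, false = receiver step) is
admissible from an initial queue `q₀` if in every prefix the number of receiver
steps is at most `q₀.length` plus the number of sender steps. -/
def admissible (q₀len : ℕ) (w : List Bool) : Prop :=
  ∀ m : ℕ, (w.take m).count false ≤ q₀len + (w.take m).count true

namespace admissible

theorem of_append {k : ℕ} {w v : List Bool} (hwv : admissible k (w ++ v)) :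
    admissible k w := by
  intro m
  have hprefix : w.take m = (w ++ v).take (min m w.length) := by
    rw [List.take_append_of_le_length (min_le_right _ _), ← List.take_take, List.take_length]
  rw [hprefix]
  exact hwv _

theorem count_false_le {k : ℕ} {w : List Bool} (hw : admissible k w) :
    w.count false ≤ k + w.count true := by
  simpa using hw w.length

end admissible

section Canonical

variable {A B V : Type*} (g : A → A) (out : A → V) (h : B → V → B)
  (σ₀ : A) (ρ₀ : B) (q₀ : List V)

def channelHistory (m : ℕ) : List V :=
  q₀ ++ (List.range m).map fun i => out (g^[i] σ₀)

theorem length_channelHistory (m : ℕ) :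
    (channelHistory g out σ₀ q₀ m).length = q₀.length + m := by
  simp [channelHistory]

theorem channelHistory_succ (m : ℕ) :
    channelHistory g out σ₀ q₀ (m + 1) = channelHistory g out σ₀ q₀ m ++ [out (g^[m] σ₀)] := by
  simp [channelHistory, List.range_succ]

def canonicalState (m n : ℕ) : A × B × List V :=
  (g^[m] σ₀, ((channelHistory g out σ₀ q₀ m).take n).foldl h ρ₀,
    (channelHistory g out σ₀ q₀ m).drop n)

variable {g out h σ₀ ρ₀ q₀}

theorem sndStep_canonicalState {m n : ℕ} (hn : n ≤ q₀.length + m) :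
    sndStep g out (canonicalState g out h σ₀ ρ₀ q₀ m n) =
      canonicalState g out h σ₀ ρ₀ q₀ (m + 1) n := by
  rw [← length_channelHistory g out σ₀ q₀ m] at hn
  simp [canonicalState, sndStep, channelHistory_succ, Function.iterate_succ_apply',
    List.take_append_of_le_length hn, List.drop_append_of_le_length hn]

theorem rcvStep_canonicalState [Inhabited V] {m n : ℕ} (hn : n < q₀.length + m) :
    rcvStep h (canonicalState g out h σ₀ ρ₀ q₀ m n) =
      canonicalState g out h σ₀ ρ₀ q₀ m (n + 1) := by
  rw [← length_channelHistory g out σ₀ q₀ m] at hn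
  simp only [canonicalState, rcvStep, List.drop_eq_getElem_cons hn, List.take_add_one,
    List.getElem?_eq_getElem hn, Option.toList_some, List.foldl_append, List.foldl_cons,
    List.foldl_nil, List.head!_cons, List.tail_cons]

theorem foldl_eq_canonicalState [Inhabited V] {w : List Bool}
    (hw : admissible q₀.length w) :
    w.foldl (fun st b => if b then sndStep g out st else rcvStep h st) (σ₀, ρ₀, q₀) =
      canonicalState g out h σ₀ ρ₀ q₀ (w.count true) (w.count false) := by
  induction w using List.reverseRecOn with
  | nil => simp [canonicalState, channelHistory]
  | append_singleton w b ih =>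
    rw [List.foldl_append, ih hw.of_append]
    cases b with
    | true => simpa using sndStep_canonicalState hw.of_append.count_false_le
    | false =>
      have hstrict : w.count false < q₀.length + w.count true := by
        simpa [List.count_append, Nat.add_one_le_iff] using hw.count_false_le
      simpa using rcvStep_canonicalState hstrict

end Canonical

/-- The final state of a producer–consumer execution over a FIFO channel is
independent of the interleaving of sender and receiver steps: any two admissible
words with the same numbers of SND and RCV steps yield the same final global
state. -/
theorem producer_consumer_interleaving_independent {A B V : Type*} [Inhabited V]
    (g : A → A) (out : A → V) (h : B → V → B)
    (σ₀ : A) (ρ₀ : B) (q₀ : List V)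
    (w₁ w₂ : List Bool)
    (h₁ : admissible q₀.length w₁) (h₂ : admissible q₀.length w₂)
    (hsnd : w₁.count true = w₂.count true)
    (hrcv : w₁.count false = w₂.count false) :
    w₁.foldl (fun st b => if b then sndStep g out st else rcvStep h st) (σ₀, ρ₀, q₀) =
    w₂.foldl (fun st b => if b then sndStep g out st else rcvStep h st) (σ₀, ρ₀, q₀) := by
  rw [foldl_eq_canonicalState h₁, foldl_eq_canonicalState h₂, hsnd, hrcv]
end
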